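/- arXiv:1506.06840 — 2 statements merged into one kernel-verified Lean document; each statement's English description precedes it below -/
import Mathlib

section
/- Let f : R^d → R be convex differentiable with L-Lipschitz gradient, and let x^{D}, x^{D+1}, ..., x^{t} be points in R^d with t − D ≤ τ. Then ∑_{d=D}^{t−1} ⟨x^d − x^{d+1}, ∇f(x^{D}) − ∇f(x^d)⟩ ≤ (L(τ−1)/2) ∑_{d=D}^{t−1} ‖x^{d+1} − x^d‖², via the bound ‖∇f(x^{D}) − ∇f(x^d)‖ ≤ ∑_{j=D}^{d−1} ‖∇f(x^{j+1}) − ∇f(x^j)‖ ≤ L ∑_{j=D}^{d−1} ‖x^{j+1} − x^j‖ combined with Cauchy–Schwarz and AM-GM. -/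
open Finset RealInnerProductSpace

lemma double_sum_aux (S : ℕ → ℝ) (D : ℕ) : ∀ t,
    ∑ d ∈ Ico D t, ∑ j ∈ Ico D d, (S d + S j) =
      ∑ k ∈ Ico D t, ((t : ℝ) - D - 1) * S k := by
  intro t
  induction t with
  | zero => simp
  | succ t ih =>
    rcases le_or_gt D t with h | h
    · rw [Finset.sum_Ico_succ_top h, Finset.sum_Ico_succ_top h, ih,
        Finset.sum_add_distrib, Finset.sum_const, Nat.card_Ico, nsmul_eq_mul,
        Nat.cast_sub h]
      have hcoef : ∀ k, ((t : ℝ) + 1 - D - 1) * S k = ((t : ℝ) - D - 1) * S k + S k := by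
        intro k; ring
      push_cast
      simp only [hcoef, Finset.sum_add_distrib]
      ring
    · have h1 : Ico D t = ∅ := Finset.Ico_eq_empty (by omega)
      have h2 : Ico D (t + 1) = ∅ := Finset.Ico_eq_empty (by omega)
      simp [h1, h2]

/-- Staleness cross-term bound: the delayed-gradient cross terms are bounded by
`(L(τ−1)/2) ∑ ‖x^{d+1} − x^d‖²`. -/
theorem staleness_cross_term_bound (dim : ℕ) (f : EuclideanSpace ℝ (Fin dim) → ℝ)
    (gradf : EuclideanSpace ℝ (Fin dim) → EuclideanSpace ℝ (Fin dim))
    (hdiff : ∀ x, HasGradientAt f (gradf x) x)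
    (hconv : ConvexOn ℝ Set.univ f)
    (L : ℝ) (hL : 0 ≤ L)
    (hlip : ∀ x y, ‖gradf x - gradf y‖ ≤ L * ‖x - y‖)
    (x : ℕ → EuclideanSpace ℝ (Fin dim))
    (D t : ℕ) (τ : ℕ) (hτ : 1 ≤ τ) (hDt : D ≤ t) (hdelay : t - D ≤ τ) :
    ∑ d ∈ Ico D t, ⟪x d - x (d + 1), gradf (x D) - gradf (x d)⟫ ≤
      L * ((τ : ℝ) - 1) / 2 * ∑ d ∈ Ico D t, ‖x (d + 1) - x d‖ ^ 2 := by
  set a : ℕ → ℝ := fun d => ‖x (d + 1) - x d‖ with ha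
  have ha0 : ∀ d, 0 ≤ a d := fun d => norm_nonneg _
  have htel : ∀ d, D ≤ d → ‖gradf (x D) - gradf (x d)‖ ≤ L * ∑ j ∈ Ico D d, a j := by
    intro d hd
    induction d, hd using Nat.le_induction with
    | base => simp
    | succ n hn ih =>
      have tri : ‖gradf (x D) - gradf (x (n + 1))‖ ≤
          ‖gradf (x D) - gradf (x n)‖ + ‖gradf (x n) - gradf (x (n + 1))‖ := by
        calc ‖gradf (x D) - gradf (x (n + 1))‖
            = ‖(gradf (x D) - gradf (x n)) + (gradf (x n) - gradf (x (n + 1)))‖ := by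
              rw [sub_add_sub_cancel]
          _ ≤ _ := norm_add_le _ _
      have hlast : ‖gradf (x n) - gradf (x (n + 1))‖ ≤ L * a n := by
        calc ‖gradf (x n) - gradf (x (n + 1))‖ ≤ L * ‖x n - x (n + 1)‖ := hlip _ _
          _ = L * a n := by rw [norm_sub_rev]
      rw [Finset.sum_Ico_succ_top hn, mul_add]
      linarith
  have key : ∀ d ∈ Ico D t, ⟪x d - x (d + 1), gradf (x D) - gradf (x d)⟫ ≤
      a d * (L * ∑ j ∈ Ico D d, a j) := by
    intro d hd
    obtain ⟨hDd, _⟩ := mem_Ico.mp hd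
    calc ⟪x d - x (d + 1), gradf (x D) - gradf (x d)⟫
        ≤ ‖x d - x (d + 1)‖ * ‖gradf (x D) - gradf (x d)‖ := real_inner_le_norm _ _
      _ = a d * ‖gradf (x D) - gradf (x d)‖ := by rw [norm_sub_rev]
      _ ≤ a d * (L * ∑ j ∈ Ico D d, a j) :=
          mul_le_mul_of_nonneg_left (htel d hDd) (ha0 d)
  have htD : (t : ℝ) - D ≤ τ := by
    have := (Nat.cast_le (α := ℝ)).mpr hdelay
    rwa [Nat.cast_sub hDt] at this
  calc ∑ d ∈ Ico D t, ⟪x d - x (d + 1), gradf (x D) - gradf (x d)⟫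
      ≤ ∑ d ∈ Ico D t, a d * (L * ∑ j ∈ Ico D d, a j) := Finset.sum_le_sum key
    _ ≤ ∑ d ∈ Ico D t, ∑ j ∈ Ico D d, (L / 2) * (a d ^ 2 + a j ^ 2) := by
        apply Finset.sum_le_sum
        intro d _
        rw [Finset.mul_sum, Finset.mul_sum]
        apply Finset.sum_le_sum
        intro j _
        nlinarith [mul_nonneg hL (sq_nonneg (a d - a j))]
    _ = L / 2 * ∑ d ∈ Ico D t, ∑ j ∈ Ico D d, (a d ^ 2 + a j ^ 2) := by
        rw [Finset.mul_sum]
        exact Finset.sum_congr rfl fun d _ => (Finset.mul_sum _ _ _).symm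
    _ = L / 2 * ∑ k ∈ Ico D t, ((t : ℝ) - D - 1) * a k ^ 2 := by
        rw [double_sum_aux]
    _ ≤ L / 2 * ∑ k ∈ Ico D t, ((τ : ℝ) - 1) * a k ^ 2 := by
        apply mul_le_mul_of_nonneg_left _ (by linarith)
        apply Finset.sum_le_sum
        intro k _
        exact mul_le_mul_of_nonneg_right (by linarith) (sq_nonneg _)
    _ = L * ((τ : ℝ) - 1) / 2 * ∑ d ∈ Ico D t, ‖x (d + 1) - x d‖ ^ 2 := by
        rw [← Finset.mul_sum]
        ring
end

section
/- Let f = (1/n)∑_{i=1}^n f_i with each f_i convex differentiable with L-Lipschitz gradient, x* a minimizer of f. For any x and any vectors α_1,...,α_n, with i uniform on {1,...,n}, β > 0, and v_i := −[∇f_i(x) − ∇f_i(α_i) + (1/n)∑_j ∇f_j(α_j)], we have E_i[‖v_i‖²] ≤ 2L(1 + 1/β)·(1/n)∑_i [f_i(α_i) − f_i(x*) − ⟨∇f_i(x*), α_i − x*⟩] + 2L(1 + β)(f(x) − f(x*)). -/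
/-!
Write `p i = ∇fᵢ(x) - ∇fᵢ(x*)` and `q i = ∇fᵢ(αᵢ) - ∇fᵢ(x*)`. Since the gradients `∇fᵢ(x*)` average
to zero, `-vᵢ = p i + (q̄ - q i)`, and Young's inequality `‖a + b‖² ≤ (1 + β)‖a‖² + (1 + 1/β)‖b‖²`
splits `‖vᵢ‖²`. The centred vectors `q̄ - q i` have second moment at most that of the `q i`, and
co-coercivity of an `L`-smooth convex function, `‖∇h(y) - ∇h(z)‖² ≤ 2L (h y - h z - ⟪∇h z, y - z⟫)`,
bounds both second moments by Bregman divergences; those at `x` average to `f x - f x*`.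
-/

open Finset RealInnerProductSpace

theorem le_add_add_half_of_hasDerivAt {φ φ' : ℝ → ℝ} {c : ℝ}
    (hφ : ∀ t, HasDerivAt φ (φ' t) t) (hφ' : ∀ t ∈ Set.Ioo (0 : ℝ) 1, φ' t ≤ φ' 0 + c * t) :
    φ 1 ≤ φ 0 + φ' 0 + c / 2 := by
  set ψ : ℝ → ℝ := fun t => t * φ' 0 + c * t ^ 2 / 2 - φ t
  have hψ : ∀ t, HasDerivAt ψ (φ' 0 + c * t - φ' t) t := fun t => by
    have hpoly := ((hasDerivAt_id t).mul_const (φ' 0)).add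
      (((hasDerivAt_pow 2 t).const_mul c).div_const 2)
    exact (hpoly.sub (hφ t)).congr_deriv (by ring)
  have hmono : MonotoneOn ψ (Set.Icc 0 1) := by
    refine monotoneOn_of_hasDerivWithinAt_nonneg (convex_Icc 0 1)
      (fun t _ => (hψ t).continuousAt.continuousWithinAt) (fun t _ => (hψ t).hasDerivWithinAt)
      fun t ht => ?_
    rw [interior_Icc] at ht
    linarith [hφ' t ht]
  have := hmono (Set.left_mem_Icc.2 zero_le_one) (Set.right_mem_Icc.2 zero_le_one) zero_le_one
  simp only [ψ] at this
  linarith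

section Gradient

variable {F : Type*} [NormedAddCommGroup F] [InnerProductSpace ℝ F] [CompleteSpace F]

theorem HasGradientAt.sum {ι : Type*} {s : Finset ι} {f : ι → F → ℝ} {g : ι → F} {x : F}
    (h : ∀ i ∈ s, HasGradientAt (f i) (g i) x) :
    HasGradientAt (fun y => ∑ i ∈ s, f i y) (∑ i ∈ s, g i) x := by
  rw [hasGradientAt_iff_hasFDerivAt, map_sum]
  exact HasFDerivAt.fun_sum fun i hi => (h i hi).hasFDerivAt

theorem HasGradientAt.const_mul {f : F → ℝ} {g x : F} (c : ℝ) (h : HasGradientAt f g x) :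
    HasGradientAt (fun y => c * f y) (c • g) x := by
  rw [hasGradientAt_iff_hasFDerivAt, map_smul]
  exact h.hasFDerivAt.const_mul c

theorem IsLocalMin.hasGradientAt_eq_zero {f : F → ℝ} {g x : F} (h : IsLocalMin f x)
    (hf : HasGradientAt f g x) : g = 0 :=
  (InnerProductSpace.toDual ℝ F).map_eq_zero_iff.1 (h.hasFDerivAt_eq_zero hf.hasFDerivAt)

theorem HasGradientAt.hasDerivAt_comp_add_smul {f : F → ℝ} {g z u : F} {t : ℝ}
    (h : HasGradientAt f g (z + t • u)) : HasDerivAt (fun s : ℝ => f (z + s • u)) ⟪g, u⟫ t := by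
  have hline : HasDerivAt (fun s : ℝ => z + s • u) u t := by
    simpa using ((hasDerivAt_id t).smul_const u).const_add z
  simpa [Function.comp_def] using h.hasFDerivAt.comp_hasDerivAt t hline

theorem ConvexOn.add_inner_sub_le_of_hasGradientAt {f : F → ℝ} (hf : ConvexOn ℝ Set.univ f)
    {g z : F} (hg : HasGradientAt f g z) (y : F) : f z + ⟪g, y - z⟫ ≤ f y := by
  have hline : ConvexOn ℝ Set.univ (fun t : ℝ => f (z + t • (y - z))) := by
    have h := hf.comp_affineMap (AffineMap.lineMap z y)
    simpa [Function.comp_def, AffineMap.lineMap_apply, add_comm] using h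
  have hd : HasDerivAt (fun t : ℝ => f (z + t • (y - z))) ⟪g, y - z⟫ 0 :=
    HasGradientAt.hasDerivAt_comp_add_smul (by simpa using hg)
  have hslope := hline.le_slope_of_hasDerivAt (Set.mem_univ 0) (Set.mem_univ 1) one_pos hd
  simp only [slope_def_field, one_smul, zero_smul, add_zero, add_sub_cancel, sub_zero,
    div_one] at hslope
  linarith

variable {f : F → ℝ} {g : F → F} {L : ℝ}

theorem le_add_inner_add_sq_of_lipschitz_gradient (hf : ∀ y, HasGradientAt f (g y) y)
    (hg : ∀ y z, ‖g y - g z‖ ≤ L * ‖y - z‖) (z y : F) :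
    f y ≤ f z + ⟪g z, y - z⟫ + L / 2 * ‖y - z‖ ^ 2 := by
  set u := y - z
  have hslope : ∀ t ∈ Set.Ioo (0 : ℝ) 1,
      ⟪g (z + t • u), u⟫ ≤ ⟪g (z + (0 : ℝ) • u), u⟫ + L * ‖u‖ ^ 2 * t := fun t ht => by
    have hlip : ‖g (z + t • u) - g z‖ ≤ L * (t * ‖u‖) := by
      simpa [norm_smul, abs_of_pos ht.1] using hg (z + t • u) z
    have hcs := real_inner_le_norm (g (z + t • u) - g z) u
    rw [inner_sub_left] at hcs
    rw [zero_smul, add_zero]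
    nlinarith [norm_nonneg u]
  have h := le_add_add_half_of_hasDerivAt (fun t => (hf _).hasDerivAt_comp_add_smul) hslope
  simp only [zero_smul, one_smul, add_zero, u, add_sub_cancel] at h
  linarith

theorem sq_norm_sub_le_of_convexOn_of_lipschitz_gradient (hconv : ConvexOn ℝ Set.univ f)
    (hf : ∀ y, HasGradientAt f (g y) y) (hL : 0 < L) (hg : ∀ y z, ‖g y - g z‖ ≤ L * ‖y - z‖)
    (y z : F) : ‖g y - g z‖ ^ 2 ≤ 2 * L * (f y - f z - ⟪g z, y - z⟫) := by
  set w := g y - g z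
  -- Compare `f` at the gradient step `y' = y - w / L` from `y` with its tangent bound at `z`.
  set y' := y - L⁻¹ • w
  have hdesc := le_add_inner_add_sq_of_lipschitz_gradient hf hg y y'
  have htangent := hconv.add_inner_sub_le_of_hasGradientAt (hf z) y'
  have hy'y : y' - y = -(L⁻¹ • w) := by simp [y']
  have hy'z : y' - z = (y - z) - L⁻¹ • w := by simp only [y']; abel
  rw [hy'y, inner_neg_right, real_inner_smul_right, norm_neg, norm_smul, Real.norm_eq_abs,
    abs_of_pos (inv_pos.2 hL)] at hdesc
  rw [hy'z, inner_sub_right, real_inner_smul_right] at htangent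
  have hw : ⟪g y, w⟫ - ⟪g z, w⟫ = ‖w‖ ^ 2 := by
    rw [← inner_sub_left, real_inner_self_eq_norm_sq]
  have key : L⁻¹ * ‖w‖ ^ 2 ≤ 2 * (f y - f z - ⟪g z, y - z⟫) := by
    have : L / 2 * (L⁻¹ * ‖w‖) ^ 2 = L⁻¹ / 2 * ‖w‖ ^ 2 := by field_simp
    rw [this] at hdesc
    linear_combination 2 * hdesc + 2 * htangent - 2 * L⁻¹ * hw
  calc ‖w‖ ^ 2 = L * (L⁻¹ * ‖w‖ ^ 2) := by field_simp
    _ ≤ L * (2 * (f y - f z - ⟪g z, y - z⟫)) := by gcongr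
    _ = 2 * L * (f y - f z - ⟪g z, y - z⟫) := by ring

end Gradient

theorem norm_add_sq_le_of_pos {E : Type*} [SeminormedAddCommGroup E] {β : ℝ} (hβ : 0 < β)
    (a b : E) : ‖a + b‖ ^ 2 ≤ (1 + β) * ‖a‖ ^ 2 + (1 + 1 / β) * ‖b‖ ^ 2 := by
  have hsq : 0 ≤ (β * ‖a‖ - ‖b‖) ^ 2 / β := by positivity
  calc ‖a + b‖ ^ 2 ≤ (‖a‖ + ‖b‖) ^ 2 := by gcongr; exact norm_add_le a b
    _ = (1 + β) * ‖a‖ ^ 2 + (1 + 1 / β) * ‖b‖ ^ 2 - (β * ‖a‖ - ‖b‖) ^ 2 / β := by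
      field_simp; ring
    _ ≤ (1 + β) * ‖a‖ ^ 2 + (1 + 1 / β) * ‖b‖ ^ 2 := by linarith

section Average

variable {ι F : Type*} [Fintype ι] [NormedAddCommGroup F] [InnerProductSpace ℝ F]

theorem sum_norm_mean_sub_sq (X : ι → F) :
    ∑ i, ‖(Fintype.card ι : ℝ)⁻¹ • ∑ j, X j - X i‖ ^ 2 =
      ∑ i, ‖X i‖ ^ 2 - (Fintype.card ι : ℝ)⁻¹ * ‖∑ j, X j‖ ^ 2 := by
  have hN : (Fintype.card ι : ℝ) * (Fintype.card ι : ℝ)⁻¹ ^ 2 = (Fintype.card ι : ℝ)⁻¹ := by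
    rcases eq_or_ne (Fintype.card ι : ℝ) 0 with h | h
    · simp [h]
    · field_simp
  simp only [norm_sub_sq_real, sum_add_distrib, sum_sub_distrib, sum_const, card_univ,
    nsmul_eq_mul, ← mul_sum, ← inner_sum, norm_smul, real_inner_smul_left,
    real_inner_self_eq_norm_sq, Real.norm_eq_abs, mul_pow, sq_abs]
  linear_combination ‖∑ j, X j‖ ^ 2 * hN

theorem sum_norm_mean_sub_sq_le (X : ι → F) :
    ∑ i, ‖(Fintype.card ι : ℝ)⁻¹ • ∑ j, X j - X i‖ ^ 2 ≤ ∑ i, ‖X i‖ ^ 2 := by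
  rw [sum_norm_mean_sub_sq]
  have : 0 ≤ (Fintype.card ι : ℝ)⁻¹ * ‖∑ j, X j‖ ^ 2 := by positivity
  linarith

theorem sum_norm_sub_add_mean_sq_le {β : ℝ} (hβ : 0 < β) (p q : ι → F) :
    ∑ i, ‖p i - q i + (Fintype.card ι : ℝ)⁻¹ • ∑ j, q j‖ ^ 2 ≤
      (1 + β) * ∑ i, ‖p i‖ ^ 2 + (1 + 1 / β) * ∑ i, ‖q i‖ ^ 2 := by
  set m := (Fintype.card ι : ℝ)⁻¹ • ∑ j, q j
  calc ∑ i, ‖p i - q i + m‖ ^ 2 ≤ ∑ i, ((1 + β) * ‖p i‖ ^ 2 + (1 + 1 / β) * ‖m - q i‖ ^ 2) :=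
        sum_le_sum fun i _ => by
          simpa only [sub_add_eq_add_sub, add_sub_assoc] using
            norm_add_sq_le_of_pos hβ (p i) (m - q i)
    _ = (1 + β) * ∑ i, ‖p i‖ ^ 2 + (1 + 1 / β) * ∑ i, ‖m - q i‖ ^ 2 := by
        rw [sum_add_distrib, mul_sum, mul_sum]
    _ ≤ (1 + β) * ∑ i, ‖p i‖ ^ 2 + (1 + 1 / β) * ∑ i, ‖q i‖ ^ 2 := by
        gcongr _ + _ * ?_
        exact sum_norm_mean_sub_sq_le q

end Average

theorem vr_estimator_variance_bound_general (d n : ℕ)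
    (f : Fin n → EuclideanSpace ℝ (Fin d) → ℝ)
    (gradf : Fin n → EuclideanSpace ℝ (Fin d) → EuclideanSpace ℝ (Fin d))
    (hdiff : ∀ i x, HasGradientAt (f i) (gradf i x) x)
    (hconv : ∀ i, ConvexOn ℝ Set.univ (f i))
    (L : ℝ) (hL : 0 < L)
    (hlip : ∀ i x y, ‖gradf i x - gradf i y‖ ≤ L * ‖x - y‖)
    (xstar : EuclideanSpace ℝ (Fin d))
    (hmin : ∀ x, (1 / (n : ℝ)) * ∑ i, f i xstar ≤ (1 / (n : ℝ)) * ∑ i, f i x)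
    (β : ℝ) (hβ : 0 < β)
    (x : EuclideanSpace ℝ (Fin d)) (α : Fin n → EuclideanSpace ℝ (Fin d))
    (v : Fin n → EuclideanSpace ℝ (Fin d))
    (hv : ∀ i, v i = -(gradf i x - gradf i (α i) + (n : ℝ)⁻¹ • ∑ j, gradf j (α j))) :
    (1 / (n : ℝ)) * ∑ i, ‖v i‖ ^ 2 ≤
      2 * L * (1 + 1 / β) *
        ((1 / (n : ℝ)) * ∑ i, (f i (α i) - f i xstar - ⟪gradf i xstar, α i - xstar⟫)) +
      2 * L * (1 + β) *
        ((1 / (n : ℝ)) * ∑ i, f i x - (1 / (n : ℝ)) * ∑ i, f i xstar) := by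
  have hmean : (1 / (n : ℝ)) • ∑ i, gradf i xstar = 0 :=
    IsLocalMin.hasGradientAt_eq_zero (Filter.Eventually.of_forall hmin)
      ((HasGradientAt.sum fun i _ => hdiff i xstar).const_mul _)
  have hcoco : ∀ y : Fin n → EuclideanSpace ℝ (Fin d),
      ∑ i, ‖gradf i (y i) - gradf i xstar‖ ^ 2 ≤
        2 * L * ∑ i, (f i (y i) - f i xstar - ⟪gradf i xstar, y i - xstar⟫) := fun y => by
    rw [mul_sum]
    exact sum_le_sum fun i _ => sq_norm_sub_le_of_convexOn_of_lipschitz_gradient (hconv i)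
      (hdiff i) hL (hlip i) (y i) xstar
  have hv' : ∀ i, ‖v i‖ = ‖(gradf i x - gradf i xstar) - (gradf i (α i) - gradf i xstar) +
      (Fintype.card (Fin n) : ℝ)⁻¹ • ∑ j, (gradf j (α j) - gradf j xstar)‖ := fun i => by
    rw [hv, norm_neg, sum_sub_distrib, smul_sub, Fintype.card_fin, ← one_div, hmean, sub_zero,
      sub_sub_sub_cancel_right, one_div]
  have hinner : 1 / (n : ℝ) * ⟪∑ i, gradf i xstar, x - xstar⟫ = 0 := by
    rw [← real_inner_smul_left, hmean, inner_zero_left]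
  calc (1 / (n : ℝ)) * ∑ i, ‖v i‖ ^ 2
      ≤ 1 / n * ((1 + β) * ∑ i, ‖gradf i x - gradf i xstar‖ ^ 2 +
          (1 + 1 / β) * ∑ i, ‖gradf i (α i) - gradf i xstar‖ ^ 2) := by
        simp_rw [hv']
        gcongr
        exact sum_norm_sub_add_mean_sq_le hβ _ _
    _ ≤ 1 / n * ((1 + β) * (2 * L * ∑ i, (f i x - f i xstar - ⟪gradf i xstar, x - xstar⟫)) +
          (1 + 1 / β) * (2 * L * ∑ i, (f i (α i) - f i xstar - ⟪gradf i xstar, α i - xstar⟫))) := by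
        gcongr
        exacts [hcoco fun _ => x, hcoco α]
    _ = _ := by
        rw [sum_sub_distrib, sum_sub_distrib, ← sum_inner]
        linear_combination (-2 * L * (1 + β)) * hinner

/-- Variance bound for the general variance-reduced gradient estimator. -/
theorem vr_estimator_variance_bound (d n : ℕ) (hn : 0 < n)
    (f : Fin n → EuclideanSpace ℝ (Fin d) → ℝ)
    (gradf : Fin n → EuclideanSpace ℝ (Fin d) → EuclideanSpace ℝ (Fin d))
    (hdiff : ∀ i x, HasGradientAt (f i) (gradf i x) x)
    (hconv : ∀ i, ConvexOn ℝ Set.univ (f i))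
    (L : ℝ) (hL : 0 < L)
    (hlip : ∀ i x y, ‖gradf i x - gradf i y‖ ≤ L * ‖x - y‖)
    (xstar : EuclideanSpace ℝ (Fin d))
    (hmin : ∀ x, (1 / (n : ℝ)) * ∑ i, f i xstar ≤ (1 / (n : ℝ)) * ∑ i, f i x)
    (β : ℝ) (hβ : 0 < β)
    (x : EuclideanSpace ℝ (Fin d)) (α : Fin n → EuclideanSpace ℝ (Fin d))
    (v : Fin n → EuclideanSpace ℝ (Fin d))
    (hv : ∀ i, v i = -(gradf i x - gradf i (α i) + (n : ℝ)⁻¹ • ∑ j, gradf j (α j))) :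
    (1 / (n : ℝ)) * ∑ i, ‖v i‖ ^ 2 ≤
      2 * L * (1 + 1 / β) *
        ((1 / (n : ℝ)) * ∑ i, (f i (α i) - f i xstar - ⟪gradf i xstar, α i - xstar⟫)) +
      2 * L * (1 + β) *
        ((1 / (n : ℝ)) * ∑ i, f i x - (1 / (n : ℝ)) * ∑ i, f i xstar) :=
  vr_estimator_variance_bound_general d n f gradf hdiff hconv L hL hlip xstar hmin β hβ x α v hv
end
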